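/- In the braid group B_4, the word σ1 σ1 σ1 σ2⁻¹ σ1 σ2⁻¹ σ3 σ2 σ2 σ2 σ3 (a braid representative of the knot 11n59) equals the product of the positive bands of its band decomposition with band centers {1, 2, 3, 5, 7, 8, 11}; in particular, this braid is quasipositive. -/

import Mathlib

/-- The Artin relations for the braid group with `m` generators
`σ_1, …, σ_m` (indexed by `Fin m`), i.e. the braid group `B_{m+1}`:
`σ_i σ_j = σ_j σ_i` for `|i - j| ≥ 2`, and
`σ_i σ_{i+1} σ_i = σ_{i+1} σ_i σ_{i+1}`. -/
def braidRels (m : ℕ) : Set (FreeGroup (Fin m)) :=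
  { r | (∃ i j : Fin m, (i : ℕ) + 2 ≤ (j : ℕ) ∧
          r = FreeGroup.of i * FreeGroup.of j * (FreeGroup.of i)⁻¹ * (FreeGroup.of j)⁻¹) ∨
        (∃ i j : Fin m, (i : ℕ) + 1 = (j : ℕ) ∧
          r = FreeGroup.of i * FreeGroup.of j * FreeGroup.of i *
              (FreeGroup.of j)⁻¹ * (FreeGroup.of i)⁻¹ * (FreeGroup.of j)⁻¹) }

/-- The braid group `B_{m+1}`, presented with `m` Artin generators.
Here index `i : Fin m` corresponds to the Artin generator `σ_{i+1}`. -/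
abbrev BraidGrp (m : ℕ) := PresentedGroup (braidRels m)

/-- The Artin generator `σ_{i+1}` of the braid group `B_{m+1}`. -/
def σ {m : ℕ} (i : Fin m) : BraidGrp m := PresentedGroup.of i

/-- A letter of a braid word: a generator index together with a sign
(`true` = the positive generator, `false` = its inverse). -/
abbrev Letter (m : ℕ) := Fin m × Bool

/-- The group element represented by a letter. -/
def letterEl {m : ℕ} (x : Letter m) : BraidGrp m :=
  if x.2 then σ x.1 else (σ x.1)⁻¹

/-- The group element represented by a braid word. -/
def wordProd {m : ℕ} (w : List (Letter m)) : BraidGrp m :=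
  (w.map letterEl).prod

/-- The band of the band decomposition of the word `w` with band centers `S`
(1-based positions) at center `p`: namely `α_p * x_p * α_p⁻¹`, where `x_p` is
the letter of `w` at position `p` and `α_p` is the product, in increasing
order of position, of the letters of `w` at positions `q < p` with `q ∉ S`. -/
def band {m : ℕ} (w : List (Letter m)) (S : List ℕ) (p : ℕ) : BraidGrp m :=
  let α : BraidGrp m :=
    wordProd (((w.zipIdx.map Prod.swap).filter fun qx => decide (qx.1 + 1 < p ∧ qx.1 + 1 ∉ S)).map Prod.snd)
  match w[p - 1]? with
  | some x => α * letterEl x * α⁻¹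
  | none => 1

/-- The product, in increasing order of band center, of the bands of the
band decomposition of the word `w` with band centers `S`. -/
def bandProd {m : ℕ} (w : List (Letter m)) (S : List ℕ) : BraidGrp m :=
  (S.map (band w S)).prod

/-- A positive band in the braid group: a conjugate `α σ_j α⁻¹` of a generator. -/
def IsPositiveBand {m : ℕ} (x : BraidGrp m) : Prop :=
  ∃ (α : BraidGrp m) (j : Fin m), x = α * σ j * α⁻¹

/-- A braid is quasipositive if it is a product of positive bands. -/
def IsQuasipositive {m : ℕ} (x : BraidGrp m) : Prop :=
  ∃ l : List (BraidGrp m), (∀ b ∈ l, IsPositiveBand b) ∧ x = l.prod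

/-- A negative band in the braid group: a conjugate `α σ_j⁻¹ α⁻¹` of the
inverse of a generator. -/
def IsNegativeBand {m : ℕ} (x : BraidGrp m) : Prop :=
  ∃ (α : BraidGrp m) (j : Fin m), x = α * (σ j)⁻¹ * α⁻¹

/-- A braid is quasinegative if it is a product of negative bands. -/
def IsQuasinegative {m : ℕ} (x : BraidGrp m) : Prop :=
  ∃ l : List (BraidGrp m), (∀ b ∈ l, IsNegativeBand b) ∧ x = l.prod

/-- The braid word for the knot `11n59` (letter `(i, true)` is `σ_(i+1)`,
`(i, false)` is `σ_(i+1)⁻¹`). -/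
def theWord : List (Letter 3) :=
  [(0, true), (0, true), (0, true), (1, false), (0, true), (1, false), (2, true), (1, true), (1, true), (1, true), (2, true)]

/-- The band centers. -/
def theCenters : List ℕ := [1, 2, 3, 5, 7, 8, 11]

/-!
Multiplying out the bands telescopes: for consecutive centers `p < p'`, `α_p⁻¹ α_{p'}` is the
product of the non-center letters strictly between them. Hence `w = b_{p₁} ⋯ b_{p_k} · c`, where
`c` is the product of all non-center letters of `w`, in order. For 11n59 these letters are
`σ₂⁻¹ σ₂⁻¹ σ₂ σ₂`, so `c = 1`; every center carries a positive letter, so every band is positive.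
-/

section BandDecomposition

variable {m : ℕ}

/-- The word spelling the conjugator `α_p` of `band w S p`. -/
def offCenterLetters (w : List (Letter m)) (S : List ℕ) (p : ℕ) : List (Letter m) :=
  ((w.zipIdx.map Prod.swap).filter fun qx => decide (qx.1 + 1 < p ∧ qx.1 + 1 ∉ S)).map Prod.snd

lemma band_of_getElem?_eq {w : List (Letter m)} {S : List ℕ} {p : ℕ} {x : Letter m}
    (h : w[p - 1]? = some x) :
    band w S p = wordProd (offCenterLetters w S p) * letterEl x *
      (wordProd (offCenterLetters w S p))⁻¹ := by
  simp only [band, h, offCenterLetters]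

lemma offCenterLetters_of_length_lt {w : List (Letter m)} {S : List ℕ} {p : ℕ}
    (hp : w.length < p) : offCenterLetters w S p = offCenterLetters w S (w.length + 1) := by
  unfold offCenterLetters
  congr 1
  refine List.filter_congr fun qx hqx => ?_
  obtain ⟨⟨x, q⟩, hmem, rfl⟩ := List.mem_map.1 hqx
  have := (List.mem_zipIdx' hmem).1
  simp only [Prod.swap_prod_mk]
  grind

lemma offCenterLetters_append_singleton (w : List (Letter m)) (S : List ℕ) (p : ℕ)
    (x : Letter m) :
    offCenterLetters (w ++ [x]) S p = offCenterLetters w S p ++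
      if w.length + 1 < p ∧ w.length + 1 ∉ S then [x] else [] := by
  by_cases h : w.length + 1 < p ∧ w.length + 1 ∉ S <;>
    simp [offCenterLetters, List.zipIdx_append, h]

lemma offCenterLetters_append_singleton_of_le {w : List (Letter m)} {S : List ℕ} {p : ℕ}
    (x : Letter m) (hp : p ≤ w.length + 1) :
    offCenterLetters (w ++ [x]) S p = offCenterLetters w S p := by
  simp [offCenterLetters_append_singleton, show ¬ w.length + 1 < p by omega]

lemma offCenterLetters_append_singleton_length_add_two (w : List (Letter m)) (S : List ℕ)
    (x : Letter m) :
    offCenterLetters (w ++ [x]) S (w.length + 2) =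
      offCenterLetters w S (w.length + 1) ++ if w.length + 1 ∈ S then [] else [x] := by
  rw [offCenterLetters_append_singleton, offCenterLetters_of_length_lt (by omega)]
  by_cases h : w.length + 1 ∈ S <;> simp [h]

lemma band_append_singleton {w : List (Letter m)} {S : List ℕ} {p : ℕ} (x : Letter m)
    (hp₀ : 0 < p) (hp : p ≤ w.length) : band (w ++ [x]) S p = band w S p := by
  obtain ⟨y, hy⟩ : ∃ y, w[p - 1]? = some y := ⟨_, List.getElem?_eq_getElem (by omega)⟩
  have hy' : (w ++ [x])[p - 1]? = some y := by rw [List.getElem?_append_left (by omega), hy]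
  rw [band_of_getElem?_eq hy, band_of_getElem?_eq hy',
    offCenterLetters_append_singleton_of_le x (by omega)]

lemma wordProd_append (u v : List (Letter m)) : wordProd (u ++ v) = wordProd u * wordProd v := by
  simp [wordProd]

lemma wordProd_eq_bands_mul_offCenter (S : List ℕ) (w : List (Letter m)) :
    wordProd w = (((List.range' 1 w.length).filter (· ∈ S)).map (band w S)).prod *
      wordProd (offCenterLetters w S (w.length + 1)) := by
  induction w using List.reverseRecOn with
  | nil => simp [wordProd, offCenterLetters]
  | append_singleton w x ih =>
    have hbands : ((List.range' 1 w.length).filter (· ∈ S)).map (band (w ++ [x]) S) =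
        ((List.range' 1 w.length).filter (· ∈ S)).map (band w S) :=
      List.map_congr_left fun p hp => by
        simp only [List.mem_filter, List.mem_range'_1] at hp
        exact band_append_singleton x (by omega) (by omega)
    have hrange : List.range' 1 (w.length + 1) = List.range' 1 w.length ++ [w.length + 1] := by
      rw [List.range'_concat, Nat.one_mul, Nat.add_comm]
    rw [List.length_append, List.length_singleton, hrange, List.filter_append, List.map_append,
      hbands, List.prod_append, offCenterLetters_append_singleton_length_add_two, wordProd_append,
      wordProd_append, ih]
    by_cases h : w.length + 1 ∈ S
    · have hx : (w ++ [x])[w.length + 1 - 1]? = some x := by simp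
      simp only [h, List.filter_cons_of_pos, decide_true, List.filter_nil, List.map_singleton,
        List.prod_singleton, band_of_getElem?_eq hx,
        offCenterLetters_append_singleton_of_le x le_rfl, if_true]
      simp only [wordProd, List.map_cons, List.map_nil, List.prod_cons, List.prod_nil, mul_one]
      group
    · simp [h, wordProd, mul_assoc]

lemma wordProd_eq_bandProd_mul_offCenter {w : List (Letter m)} {S : List ℕ}
    (hS : S.Pairwise (· < ·)) (hSw : ∀ p ∈ S, 0 < p ∧ p ≤ w.length) :
    wordProd w = bandProd w S * wordProd (offCenterLetters w S (w.length + 1)) := by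
  have hS_eq : (List.range' 1 w.length).filter (· ∈ S) = S :=
    ((List.pairwise_lt_range' 1).filter _).eq_of_mem_iff hS fun p => by
      simp only [List.mem_filter, List.mem_range'_1, decide_eq_true_eq]
      exact ⟨And.right, fun hp => ⟨by have := hSw p hp; omega, hp⟩⟩
  rw [bandProd, ← hS_eq, wordProd_eq_bands_mul_offCenter, hS_eq]

lemma isPositiveBand_band {w : List (Letter m)} {S : List ℕ} {p : ℕ} {j : Fin m}
    (h : w[p - 1]? = some (j, true)) : IsPositiveBand (band w S p) :=
  ⟨_, j, band_of_getElem?_eq h⟩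

lemma isQuasipositive_bandProd {w : List (Letter m)} {S : List ℕ}
    (h : ∀ p ∈ S, ∃ j, w[p - 1]? = some (j, true)) : IsQuasipositive (bandProd w S) :=
  ⟨S.map (band w S), by
    simp only [List.mem_map]
    rintro _ ⟨p, hp, rfl⟩
    obtain ⟨j, hj⟩ := h p hp
    exact isPositiveBand_band hj, rfl⟩

end BandDecomposition

/-- The braid representative of `11n59` equals the product of the bands of its
band decomposition with the given band centers; in particular it is quasipositive. -/
theorem knot_11n59_quasipositive :
    wordProd theWord = bandProd theWord theCenters ∧
      IsQuasipositive (wordProd theWord) := by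
  have h_offCenter : offCenterLetters theWord theCenters (theWord.length + 1) =
      [(1, false), (1, false), (1, true), (1, true)] := by
    decide
  have h_eq : wordProd theWord = bandProd theWord theCenters := by
    rw [wordProd_eq_bandProd_mul_offCenter (S := theCenters) (by decide) (by decide), h_offCenter]
    simp [wordProd, letterEl]
  exact ⟨h_eq, h_eq ▸ isQuasipositive_bandProd (by decide)⟩
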